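/- Let G and H be chain graphs with I(H) ⊆ I(G), and let α be a chain consistent with H. If no descendant of a node X in G lies to the left of X in α, then every descendant of X in G is also a descendant of X in H. -/
import Mathlib


/-- A hybrid graph over a vertex set `V`: it has directed edges (`dir`) and
undirected edges (`undir`, stored as a symmetric irreflexive relation). -/
structure HybridGraph (V : Type) where
  dir : V → V → Prop
  undir : V → V → Prop
  dir_irrefl : ∀ x, ¬ dir x x
  undir_irrefl : ∀ x, ¬ undir x x
  undir_symm : ∀ x y, undir x y → undir y x

namespace HybridGraph

variable {V : Type}

/-- Two nodes are adjacent if joined by a directed or undirected edge. -/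
def adj (G : HybridGraph V) (x y : V) : Prop :=
  G.dir x y ∨ G.dir y x ∨ G.undir x y

/-- One step of a descending route: `x − y` or `x → y`. -/
def descStep (G : HybridGraph V) (x y : V) : Prop := G.dir x y ∨ G.undir x y

/-- `y` is a descendant of `x`: there is a descending route from `x` to `y`
(routes of length zero allowed). -/
def descendant (G : HybridGraph V) : V → V → Prop :=
  Relation.ReflTransGen G.descStep

/-- There is an undirected route between `x` and `y` (length zero allowed). -/
def uconn (G : HybridGraph V) : V → V → Prop :=
  Relation.ReflTransGen G.undir

/-- A chain is modeled by a function `f : V → ℕ` assigning each node the index of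
its block.  `G` is consistent with the chain `f` if directed edges go strictly
left-to-right and undirected edges stay within a block. -/
def ConsistentWith (G : HybridGraph V) (f : V → ℕ) : Prop :=
  (∀ x y, G.dir x y → f x < f y) ∧ (∀ x y, G.undir x y → f x = f y)

/-- A chain graph is a hybrid graph consistent with some chain. -/
def IsChainGraph (G : HybridGraph V) : Prop := ∃ f : V → ℕ, G.ConsistentWith f

/-- The component (maximal undirected-connected set) containing `x`. -/
def component (G : HybridGraph V) (x : V) : Set V := {y | G.uconn x y}

def IsComponent (G : HybridGraph V) (C : Set V) : Prop := ∃ x, C = G.component x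

/-- The descendants of a set of nodes. -/
def descendantsOf (G : HybridGraph V) (S : Set V) : Set V :=
  {y | ∃ x ∈ S, G.descendant x y}

/-- A component is terminal if its set of descendants is exactly itself. -/
def IsTerminal (G : HybridGraph V) (C : Set V) : Prop := G.descendantsOf C = C

/-- Parents of a set of nodes. -/
def Pa (G : HybridGraph V) (S : Set V) : Set V := {x | ∃ y ∈ S, G.dir x y}

/-- Neighbors of a set of nodes. -/
def nbr (G : HybridGraph V) (S : Set V) : Set V := {x | ∃ y ∈ S, G.undir x y}

/-- Boundary of a node: parents together with neighbors. -/
def Bd (G : HybridGraph V) (x : V) : Set V := {y | G.dir y x ∨ G.undir y x}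

inductive EdgeKind | fwd | bwd | und
deriving DecidableEq

/-- A route in `G` of length `n`: nodes `φ 0, …, φ n`, where the `i`-th edge is
directed forwards, directed backwards, or undirected according to `kind i`. -/
structure Route (G : HybridGraph V) where
  n : ℕ
  φ : ℕ → V
  kind : ℕ → EdgeKind
  valid : ∀ i < n,
    (kind i = EdgeKind.fwd → G.dir (φ i) (φ (i+1))) ∧
    (kind i = EdgeKind.bwd → G.dir (φ (i+1)) (φ i)) ∧
    (kind i = EdgeKind.und → G.undir (φ i) (φ (i+1)))

namespace Route

variable {G : HybridGraph V}

/-- Positions `a ≤ k ≤ b` form a collider section of the route: a maximal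
undirected subroute entered by an arrowhead on both sides. -/
def ColliderSec (ρ : Route G) (a b : ℕ) : Prop :=
  a ≤ b ∧ b < ρ.n ∧ 0 < a ∧
  (∀ i, a ≤ i → i < b → ρ.kind i = EdgeKind.und) ∧
  ρ.kind (a-1) = EdgeKind.fwd ∧ ρ.kind b = EdgeKind.bwd

/-- Position `k` lies in a collider section of the route. -/
def ColliderPos (ρ : Route G) (k : ℕ) : Prop :=
  ∃ a b, a ≤ k ∧ k ≤ b ∧ ρ.ColliderSec a b

/-- A route is `Z`-active when every collider section has a node in `Z` and every
non-collider section has no node in `Z`. -/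
def ZActive (ρ : Route G) (Z : Set V) : Prop :=
  (∀ a b, ρ.ColliderSec a b → ∃ k, a ≤ k ∧ k ≤ b ∧ ρ.φ k ∈ Z) ∧
  (∀ k, k ≤ ρ.n → ¬ ρ.ColliderPos k → ρ.φ k ∉ Z)

end Route

/-- Separation `X ⫫_G Y | Z`: no `Z`-active route between a node of `X` and a
node of `Y`. -/
def Sep (G : HybridGraph V) (X Y Z : Set V) : Prop :=
  ¬ ∃ ρ : Route G, ρ.φ 0 ∈ X ∧ ρ.φ ρ.n ∈ Y ∧ ρ.ZActive Z

/-- `I(H) ⊆ I(G)`: every separation statement of `H` is one of `G`. -/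
def ModelLe (H G : HybridGraph V) : Prop :=
  ∀ X Y Z : Set V, Disjoint X Y → Disjoint X Z → Disjoint Y Z →
    H.Sep X Y Z → G.Sep X Y Z

/-- Result of splitting the component `C` into `C \ L` and `L`: every undirected
edge from `C \ L` to `L` becomes directed towards `L`. -/
def splitGraph (G : HybridGraph V) (C L : Set V) : HybridGraph V where
  dir x y := G.dir x y ∨ (x ∈ C \ L ∧ y ∈ L ∧ G.undir x y)
  undir x y := G.undir x y ∧ ¬((x ∈ C \ L ∧ y ∈ L) ∨ (y ∈ C \ L ∧ x ∈ L))
  dir_irrefl := by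
    intro x h
    rcases h with h | ⟨hx, hy, _⟩
    · exact G.dir_irrefl x h
    · exact hx.2 hy
  undir_irrefl := fun x h => G.undir_irrefl x h.1
  undir_symm := by
    intro x y h
    exact ⟨G.undir_symm x y h.1, fun hc => h.2 (Or.symm hc)⟩

/-- `H` is obtained from `G` by a feasible split of a component `C` into the two
nonempty connected parts `C \ L` and `L`. -/
def IsFeasibleSplit (G H : HybridGraph V) : Prop :=
  ∃ C L : Set V, G.IsComponent C ∧ L ⊆ C ∧ L.Nonempty ∧ (C \ L).Nonempty ∧
    (∀ x ∈ L, ∀ y ∈ L, G.uconn x y) ∧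
    (∀ x ∈ C \ L, ∀ y ∈ C \ L, G.uconn x y) ∧
    (∀ x ∈ G.nbr L ∩ (C \ L), ∀ y ∈ G.nbr L ∩ (C \ L), x ≠ y → G.undir x y) ∧
    (∀ x ∈ G.Pa L, ∀ y ∈ G.nbr L ∩ (C \ L), G.dir x y) ∧
    H = G.splitGraph C L

/-- Result of merging the components `L` and `R`: every directed edge from `L`
to `R` becomes undirected. -/
def mergeGraph (G : HybridGraph V) (L R : Set V) : HybridGraph V where
  dir x y := G.dir x y ∧ ¬(x ∈ L ∧ y ∈ R)
  undir x y := G.undir x y ∨ (x ∈ L ∧ y ∈ R ∧ G.dir x y) ∨ (y ∈ L ∧ x ∈ R ∧ G.dir y x)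
  dir_irrefl := fun x h => G.dir_irrefl x h.1
  undir_irrefl := by
    intro x h
    rcases h with h | ⟨_, _, h⟩ | ⟨_, _, h⟩
    · exact G.undir_irrefl x h
    · exact G.dir_irrefl x h
    · exact G.dir_irrefl x h
  undir_symm := by
    intro x y h
    rcases h with h | h | h
    · exact Or.inl (G.undir_symm x y h)
    · exact Or.inr (Or.inr h)
    · exact Or.inr (Or.inl h)

/-- `H` is obtained from `G` by a feasible merging of two components `L`, `R`. -/
def IsFeasibleMerge (G H : HybridGraph V) : Prop :=
  ∃ L R : Set V, G.IsComponent L ∧ G.IsComponent R ∧ L ≠ R ∧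
    (G.Pa R ∩ L).Nonempty ∧
    (∀ x ∈ G.Pa R ∩ L, ∀ y ∈ G.Pa R ∩ L, x ≠ y → G.undir x y) ∧
    (∀ x ∈ G.Pa R \ L, ∀ y ∈ G.Pa R ∩ L, G.dir x y) ∧
    H = G.mergeGraph L R

/-- `H` is obtained from `G` by adding a single (previously absent) directed or
undirected edge between two distinct nodes. -/
def IsEdgeAddition (G H : HybridGraph V) : Prop :=
  ∃ a b : V, a ≠ b ∧
    ((¬ G.dir a b ∧ (H.dir = fun x y => G.dir x y ∨ (x = a ∧ y = b)) ∧
        H.undir = G.undir) ∨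
     (¬ G.undir a b ∧ H.dir = G.dir ∧
        (H.undir = fun x y => G.undir x y ∨ (x = a ∧ y = b) ∨ (x = b ∧ y = a))))

/-- `H` is obtained from `G` by removing a single directed or undirected edge. -/
def IsEdgeRemoval (G H : HybridGraph V) : Prop :=
  ∃ a b : V,
    (G.dir a b ∧ (H.dir = fun x y => G.dir x y ∧ ¬(x = a ∧ y = b)) ∧
       H.undir = G.undir) ∨
    (G.undir a b ∧ H.dir = G.dir ∧
       (H.undir = fun x y => G.undir x y ∧ ¬((x = a ∧ y = b) ∨ (x = b ∧ y = a))))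

end HybridGraph

open HybridGraph

variable {V : Type}

/-- `X`, `Y`, `Z`, `W` are pairwise disjoint. -/
def PairwiseDisj (X Y Z W : Set V) : Prop :=
  Disjoint X Y ∧ Disjoint X Z ∧ Disjoint X W ∧
  Disjoint Y Z ∧ Disjoint Y W ∧ Disjoint Z W

/-- A graphoid: an independence model closed under symmetry, decomposition,
weak union, contraction and intersection (for pairwise disjoint arguments). -/
structure Graphoid (V : Type) where
  ind : Set V → Set V → Set V → Prop
  symm : ∀ X Y Z : Set V, Disjoint X Y → Disjoint X Z → Disjoint Y Z →
    ind X Y Z → ind Y X Z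
  decomp : ∀ X Y W Z : Set V, PairwiseDisj X Y Z W → ind X (Y ∪ W) Z → ind X Y Z
  weakUnion : ∀ X Y W Z : Set V, PairwiseDisj X Y Z W → ind X (Y ∪ W) Z →
    ind X Y (Z ∪ W)
  contraction : ∀ X Y W Z : Set V, PairwiseDisj X Y Z W → ind X Y (Z ∪ W) →
    ind X W Z → ind X (Y ∪ W) Z
  inter : ∀ X Y W Z : Set V, PairwiseDisj X Y Z W → ind X Y (Z ∪ W) →
    ind X W (Z ∪ Y) → ind X (Y ∪ W) Z

/-- `G` is an independence map of the model `M`: `I(G) ⊆ M`. -/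
def IsIMap (G : HybridGraph V) (M : Set V → Set V → Set V → Prop) : Prop :=
  ∀ X Y Z : Set V, Disjoint X Y → Disjoint X Z → Disjoint Y Z →
    G.Sep X Y Z → M X Y Z

/-- `Gα` is a minimal independence map of `M` relative to the chain `f`. -/
def IsMinIMapRel (M : Set V → Set V → Set V → Prop) (f : V → ℕ)
    (Gα : HybridGraph V) : Prop :=
  Gα.ConsistentWith f ∧ IsIMap Gα M ∧
    ∀ H : HybridGraph V, IsEdgeRemoval Gα H → ¬ IsIMap H M

private lemma desc_mono {H : HybridGraph V} {f : V → ℕ} (hf : H.ConsistentWith f)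
    {u v : V} (h : H.descendant u v) : f u ≤ f v := by
  induction h with
  | refl => exact le_refl _
  | tail _ h₂ ih =>
    rcases h₂ with hd | hu
    · exact ih.trans (le_of_lt (hf.1 _ _ hd))
    · exact ih.trans (le_of_eq (hf.2 _ _ hu))

private lemma desc_rev {H : HybridGraph V} {f : V → ℕ} (hf : H.ConsistentWith f)
    {u v : V} (h : H.descendant u v) : f v ≤ f u → H.descendant v u := by
  induction h with
  | refl => exact fun _ => Relation.ReflTransGen.refl
  | @tail w x h₁ h₂ ih =>
    intro hle
    have huw : f u ≤ f w := desc_mono hf h₁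
    rcases h₂ with hd | hu
    · have := hf.1 _ _ hd
      omega
    · have hwx : f w = f x := hf.2 _ _ hu
      exact Relation.ReflTransGen.head (Or.inr (H.undir_symm _ _ hu)) (ih (by omega))

private lemma route_extend {G : HybridGraph V} (ρ : Route G) (d : V)
    (h : G.descStep (ρ.φ ρ.n) d) :
    ∃ ρ' : Route G, ρ'.n = ρ.n + 1 ∧ (∀ i ≤ ρ.n, ρ'.φ i = ρ.φ i) ∧ ρ'.φ (ρ.n + 1) = d ∧
      (∀ i < ρ.n, ρ'.kind i = ρ.kind i) ∧ ρ'.kind ρ.n ≠ EdgeKind.bwd := by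
  classical
  refine ⟨⟨ρ.n + 1, fun i => if i ≤ ρ.n then ρ.φ i else d,
    fun i => if i < ρ.n then ρ.kind i
      else if G.dir (ρ.φ ρ.n) d then EdgeKind.fwd else EdgeKind.und, ?_⟩,
    rfl, fun i hi => if_pos hi, ?_, fun i hi => if_pos hi, ?_⟩
  · intro i hi
    rcases Nat.lt_or_ge i ρ.n with hc | hc
    · beta_reduce
      rw [if_pos hc, if_pos hc.le, if_pos (Nat.succ_le_of_lt hc)]
      exact ρ.valid i hc
    · have hieq : i = ρ.n := by omega
      subst hieq
      beta_reduce
      rw [if_neg (lt_irrefl ρ.n), if_pos (le_refl ρ.n),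
        if_neg (show ¬ ρ.n + 1 ≤ ρ.n by omega)]
      by_cases hdir : G.dir (ρ.φ ρ.n) d
      · rw [if_pos hdir]
        exact ⟨fun _ => hdir, fun h' => EdgeKind.noConfusion h',
          fun h' => EdgeKind.noConfusion h'⟩
      · rw [if_neg hdir]
        exact ⟨fun h' => EdgeKind.noConfusion h', fun h' => EdgeKind.noConfusion h',
          fun _ => h.resolve_left hdir⟩
  · show (if ρ.n + 1 ≤ ρ.n then ρ.φ (ρ.n + 1) else d) = d
    rw [if_neg (show ¬ ρ.n + 1 ≤ ρ.n by omega)]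
  · show (if ρ.n < ρ.n then ρ.kind ρ.n
      else if G.dir (ρ.φ ρ.n) d then EdgeKind.fwd else EdgeKind.und) ≠ EdgeKind.bwd
    rw [if_neg (lt_irrefl _)]
    by_cases hdir : G.dir (ρ.φ ρ.n) d <;> simp [hdir]

private lemma key {G H : HybridGraph V} (hle : ModelLe H G) {f : V → ℕ}
    (hf : H.ConsistentWith f) {X b : V} (hfb : f X ≤ f b)
    (ρG : Route G) (h0 : ρG.φ 0 = X) (hlast : ρG.φ ρG.n = b)
    (hkinds : ∀ i < ρG.n, ρG.kind i ≠ EdgeKind.bwd)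
    (hD : ∀ k ≤ ρG.n, H.descendant X (ρG.φ k) ∨ ρG.φ k = b) :
    H.descendant X b := by
  classical
  by_cases hbD : H.descendant X b
  · exact hbD
  set Z : Set V := {v | ¬ H.descendant X v ∧ v ≠ b} with hZdef
  have hmemZ : ∀ v, v ∈ Z ↔ (¬ H.descendant X v ∧ v ≠ b) := fun v => Iff.rfl
  have hXZ : X ∉ Z := fun h => ((hmemZ X).mp h).1 Relation.ReflTransGen.refl
  have hbZ : b ∉ Z := fun h => ((hmemZ b).mp h).2 rfl
  have hXb : X ≠ b := fun h => hbD (h ▸ Relation.ReflTransGen.refl)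
  have hGsep : ¬ G.Sep {X} {b} Z := by
    intro hsep
    refine hsep ⟨ρG, h0, hlast, ?_, ?_⟩
    · intro a' b' hsec
      exact absurd hsec.2.2.2.2.2 (hkinds b' hsec.2.1)
    · intro k hk _
      rcases hD k hk with h | h
      · exact fun hz => ((hmemZ _).mp hz).1 h
      · exact fun hz => ((hmemZ _).mp hz).2 h
  have hHsep : ¬ H.Sep {X} {b} Z := fun h =>
    hGsep (hle _ _ _ (Set.disjoint_singleton_left.mpr hXb)
      (Set.disjoint_singleton_left.mpr hXZ) (Set.disjoint_singleton_left.mpr hbZ) h)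
  have hex : ∃ n, ∃ ρ : Route H, ρ.n = n ∧ ρ.φ 0 = X ∧ ρ.φ ρ.n = b ∧ ρ.ZActive Z := by
    rcases not_not.mp hHsep with ⟨ρ, h1, h2, h3⟩
    exact ⟨ρ.n, ρ, rfl, h1, h2, h3⟩
  obtain ⟨n₀, ⟨ρ, hρn, hρ0, hρb, hact⟩, hmin⟩ :
      ∃ n₀, (∃ ρ : Route H, ρ.n = n₀ ∧ ρ.φ 0 = X ∧ ρ.φ ρ.n = b ∧ ρ.ZActive Z) ∧
        ∀ k, k < n₀ → ¬ (∃ ρ'' : Route H, ρ''.n = k ∧ ρ''.φ 0 = X ∧ ρ''.φ ρ''.n = b ∧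
          ρ''.ZActive Z) :=
    ⟨Nat.find hex, Nat.find_spec hex, fun k hk => Nat.find_min hex hk⟩
  -- Step A : every non-collider position strictly before the end is a descendant
  have stepA : ∀ k, k < ρ.n → ¬ ρ.ColliderPos k → H.descendant X (ρ.φ k) := by
    intro k hk hnc
    by_contra hkD
    have hkb : ρ.φ k = b := by
      by_contra hne
      exact hact.2 k hk.le hnc ((hmemZ _).mpr ⟨hkD, hne⟩)
    have hPk : ∃ ρ'' : Route H, ρ''.n = k ∧ ρ''.φ 0 = X ∧ ρ''.φ ρ''.n = b ∧
        ρ''.ZActive Z := by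
      refine ⟨⟨k, ρ.φ, ρ.kind, fun i hi => ρ.valid i (hi.trans hk)⟩, rfl, hρ0, hkb, ?_, ?_⟩
      · intro a' b' hsec
        exact hact.1 a' b' ⟨hsec.1, hsec.2.1.trans hk, hsec.2.2.1, hsec.2.2.2.1,
          hsec.2.2.2.2.1, hsec.2.2.2.2.2⟩
      · intro j hj hjnc
        refine hact.2 j (hj.trans hk.le) ?_
        rintro ⟨a₂, b₂, hja, hjb, hsec⟩
        have hjk : j ≤ k := hj
        by_cases hcase : b₂ < k
        · exact hjnc ⟨a₂, b₂, hja, hjb, hsec.1, hcase, hsec.2.2.1, hsec.2.2.2.1,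
            hsec.2.2.2.2.1, hsec.2.2.2.2.2⟩
        · exact hnc ⟨a₂, b₂, by omega, by omega, hsec⟩
    exact hmin k (hρn ▸ hk) hPk
  -- Step B : the minimal active route has no collider section at all
  have noColl : ∀ a' b', ¬ ρ.ColliderSec a' b' := by
    intro a' b' hsec
    obtain ⟨hab, hbn, hapos, hund, hfwd, hbwd⟩ := hsec
    have hp_lt : a' - 1 < ρ.n := by omega
    have hp_nc : ¬ ρ.ColliderPos (a' - 1) := by
      rintro ⟨a₂, b₂, h1, h2, hsec₂⟩
      obtain ⟨g1, g2, g3, g4, g5, g6⟩ := hsec₂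
      rcases lt_or_eq_of_le h2 with h | h
      · have h4 := g4 (a' - 1) h1 h
        rw [hfwd] at h4
        exact EdgeKind.noConfusion h4
      · rw [← h] at g6
        rw [hfwd] at g6
        exact EdgeKind.noConfusion g6
    have hpD : H.descendant X (ρ.φ (a' - 1)) := stepA _ hp_lt hp_nc
    have hsecD : ∀ t, a' + t ≤ b' → H.descendant X (ρ.φ (a' + t)) := by
      intro t
      induction t with
      | zero =>
        intro _
        have hdir := (ρ.valid (a' - 1) hp_lt).1 hfwd
        rw [show a' - 1 + 1 = a' by omega] at hdir
        exact hpD.tail (Or.inl hdir)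
      | succ t ih =>
        intro h
        have hu := (ρ.valid (a' + t) (by omega)).2.2 (hund (a' + t) (by omega) (by omega))
        exact (ih (by omega)).tail (Or.inr hu)
    obtain ⟨k, hk1, hk2, hkZ⟩ := hact.1 a' b' ⟨hab, hbn, hapos, hund, hfwd, hbwd⟩
    have hkd : H.descendant X (ρ.φ k) := by
      rw [show k = a' + (k - a') by omega]
      exact hsecD _ (by omega)
    exact ((hmemZ _).mp hkZ).1 hkd
  have allD : ∀ k, k < ρ.n → H.descendant X (ρ.φ k) := by
    intro k hk
    refine stepA k hk ?_
    rintro ⟨a', b', _, _, hsec⟩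
    exact noColl a' b' hsec
  by_cases hfwd : ∃ i, i < ρ.n ∧ ρ.kind i = EdgeKind.fwd
  · -- there is a first forward edge `m`; after it no backward edge appears
    obtain ⟨hmn, hmf⟩ : Nat.find hfwd < ρ.n ∧ ρ.kind (Nat.find hfwd) = EdgeKind.fwd :=
      Nat.find_spec hfwd
    set m := Nat.find hfwd with hmdef
    have hnobwd : ∀ j, m ≤ j → j < ρ.n → ρ.kind j ≠ EdgeKind.bwd := by
      intro j hmj hjn hjb
      have hex2 : ∃ j, m ≤ j ∧ j < ρ.n ∧ ρ.kind j = EdgeKind.bwd := ⟨j, hmj, hjn, hjb⟩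
      obtain ⟨j₀, ⟨hmj0, hj0n, hj0b⟩, hj0min⟩ :
          ∃ j₀, (m ≤ j₀ ∧ j₀ < ρ.n ∧ ρ.kind j₀ = EdgeKind.bwd) ∧
            ∀ i, i < j₀ → ¬ (m ≤ i ∧ i < ρ.n ∧ ρ.kind i = EdgeKind.bwd) :=
        ⟨Nat.find hex2, Nat.find_spec hex2, fun i hi => Nat.find_min hex2 hi⟩
      have hmj0' : m < j₀ := by
        rcases lt_or_eq_of_le hmj0 with h | h
        · exact h
        · rw [← h] at hj0b
          rw [hmf] at hj0b
          exact EdgeKind.noConfusion hj0b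
      have hmle : m ≤ j₀ - 1 := by omega
      obtain ⟨i₀, hi0f, hi0le, hmi0, hi0max⟩ :
          ∃ i₀, ρ.kind i₀ = EdgeKind.fwd ∧ i₀ ≤ j₀ - 1 ∧ m ≤ i₀ ∧
            ∀ i, i₀ < i → i ≤ j₀ - 1 → ρ.kind i ≠ EdgeKind.fwd :=
        ⟨Nat.findGreatest (fun i => ρ.kind i = EdgeKind.fwd) (j₀ - 1),
          Nat.findGreatest_spec (P := fun i => ρ.kind i = EdgeKind.fwd) hmle hmf,
          Nat.findGreatest_le _,
          Nat.le_findGreatest (P := fun i => ρ.kind i = EdgeKind.fwd) hmle hmf,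
          fun i h1 h2 =>
            Nat.findGreatest_is_greatest (P := fun i => ρ.kind i = EdgeKind.fwd) h1 h2⟩
      refine noColl (i₀ + 1) j₀ ⟨by omega, hj0n, by omega, ?_, ?_, hj0b⟩
      · intro i hi1 hi2
        have hnf : ρ.kind i ≠ EdgeKind.fwd := hi0max i (by omega) (by omega)
        have hnb2 : ρ.kind i ≠ EdgeKind.bwd := by
          intro h
          exact hj0min i (by omega) ⟨by omega, by omega, h⟩
        cases hE : ρ.kind i with
        | fwd => exact absurd hE hnf
        | bwd => exact absurd hE hnb2
        | und => rfl
      · rw [show i₀ + 1 - 1 = i₀ by omega]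
        exact hi0f
    have hdesc2 : ∀ t, m + t ≤ ρ.n → H.descendant (ρ.φ m) (ρ.φ (m + t)) := by
      intro t
      induction t with
      | zero => exact fun _ => Relation.ReflTransGen.refl
      | succ t ih =>
        intro h
        have hlt : m + t < ρ.n := by omega
        have hk := hnobwd (m + t) (by omega) hlt
        have step : H.descStep (ρ.φ (m + t)) (ρ.φ (m + t + 1)) := by
          cases hE : ρ.kind (m + t) with
          | fwd => exact Or.inl ((ρ.valid _ hlt).1 hE)
          | bwd => exact absurd hE hk
          | und => exact Or.inr ((ρ.valid _ hlt).2.2 hE)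
        exact (ih (by omega)).tail step
    have hXm : H.descendant X (ρ.φ m) := allD m hmn
    have hmb : H.descendant (ρ.φ m) b := by
      have h := hdesc2 (ρ.n - m) (by omega)
      rw [show m + (ρ.n - m) = ρ.n by omega, hρb] at h
      exact h
    exact hXm.trans hmb
  · -- no forward edge at all: the whole route descends from `b` back to `X`
    have hrev : ∀ j, j ≤ ρ.n → H.descendant (ρ.φ j) X := by
      intro j
      induction j with
      | zero =>
        intro _
        rw [hρ0]
        exact Relation.ReflTransGen.refl
      | succ j ih =>
        intro h
        have hlt : j < ρ.n := by omega
        have step : H.descStep (ρ.φ (j + 1)) (ρ.φ j) := by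
          cases hE : ρ.kind j with
          | fwd => exact absurd ⟨j, hlt, hE⟩ hfwd
          | bwd => exact Or.inl ((ρ.valid _ hlt).2.1 hE)
          | und => exact Or.inr (H.undir_symm _ _ ((ρ.valid _ hlt).2.2 hE))
        exact Relation.ReflTransGen.head step (ih (by omega))
    have hbX : H.descendant b X := hρb ▸ hrev ρ.n le_rfl
    exact desc_rev hf hbX hfb

/-- if `I(H) ⊆ I(G)`, `α` (here `f`) is a chain consistent with
`H`, and no descendant of `X` in `G` is to the left of `X` in the chain, then
every descendant of `X` in `G` is a descendant of `X` in `H`. -/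
theorem descendants_subset [Fintype V] (G H : HybridGraph V)
    (hG : G.IsChainGraph) (hH : H.IsChainGraph) (hle : ModelLe H G)
    (f : V → ℕ) (hf : H.ConsistentWith f) (X : V)
    (hleft : ∀ d : V, G.descendant X d → ¬ f d < f X) :
    ∀ d : V, G.descendant X d → H.descendant X d := by
  classical
  have main : ∀ d : V, G.descendant X d →
      H.descendant X d ∧ ∃ ρ : Route G, ρ.φ 0 = X ∧ ρ.φ ρ.n = d ∧
        (∀ i < ρ.n, ρ.kind i ≠ EdgeKind.bwd) ∧
        (∀ k ≤ ρ.n, H.descendant X (ρ.φ k)) := by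
    intro d hd
    induction hd with
    | refl =>
      exact ⟨Relation.ReflTransGen.refl,
        ⟨0, fun _ => X, fun _ => EdgeKind.und, fun i hi => absurd hi (Nat.not_lt_zero i)⟩,
        rfl, rfl, fun i hi => absurd hi (Nat.not_lt_zero i), fun k _ => Relation.ReflTransGen.refl⟩
    | @tail mid d h₁ h₂ ih =>
      obtain ⟨hmid, ρ, hρ0, hρmid, hρk, hρD⟩ := ih
      have hstep : G.descStep (ρ.φ ρ.n) d := by rw [hρmid]; exact h₂
      obtain ⟨ρ', hn', hφ', hφd, hk', hklast⟩ := route_extend ρ d hstep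
      have hρ'0 : ρ'.φ 0 = X := by rw [hφ' 0 (Nat.zero_le _), hρ0]
      have hρ'd : ρ'.φ ρ'.n = d := by rw [hn', hφd]
      have hρ'k : ∀ i < ρ'.n, ρ'.kind i ≠ EdgeKind.bwd := by
        intro i hi
        rw [hn'] at hi
        rcases Nat.lt_or_ge i ρ.n with hc | hc
        · rw [hk' i hc]; exact hρk i hc
        · have hieq : i = ρ.n := by omega
          rw [hieq]; exact hklast
      have hρ'D : ∀ k ≤ ρ'.n, H.descendant X (ρ'.φ k) ∨ ρ'.φ k = d := by
        intro k hk
        rw [hn'] at hk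
        rcases Nat.lt_or_ge k (ρ.n + 1) with hc | hc
        · left; rw [hφ' k (by omega)]; exact hρD k (by omega)
        · right
          rw [show k = ρ.n + 1 by omega, hφd]
      have hfd : f X ≤ f d := le_of_not_gt (hleft d (h₁.tail h₂))
      have hd' : H.descendant X d := key hle hf hfd ρ' hρ'0 hρ'd hρ'k hρ'D
      refine ⟨hd', ρ', hρ'0, hρ'd, hρ'k, ?_⟩
      intro k hk
      rcases hρ'D k hk with h | h
      · exact h
      · rw [h]; exact hd'
  intro d hd
  exact (main d hd).1
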